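/- Regard the real quaternions ℍ as a four-dimensional real inner product space with inner product ⟨x,y⟩ = Re(x·conj(y)). Let S be the 48-element set given by the union of the 24 Hurwitz units with the 24 quaternions (ε a + ε' b)/√2 for two-element subsets {a,b} ⊆ {1,i,j,k} and ε, ε' ∈ {±1} (the binary octahedral group 2O). Then S is closed under the reflection s_α for every α ∈ S: for all α, v ∈ S, v − 2⟨v,α⟩α ∈ S. Hence the 48 rotors generated by the reflections of B₃, viewed as vectors in 4-dimensional Euclidean space, form a root system (a rescaled root system of type F₄). -/

import Mathlib

noncomputable section

/-- The quaternion unit `i`. -/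
def qi : Quaternion ℝ := ⟨0, 1, 0, 0⟩
/-- The quaternion unit `j`. -/
def qj : Quaternion ℝ := ⟨0, 0, 1, 0⟩
/-- The quaternion unit `k`. -/
def qk : Quaternion ℝ := ⟨0, 0, 0, 1⟩

/-- The sign set `{1, -1}`. -/
def pm : Set ℝ := {1, -1}

/-- The 24 Hurwitz units `±1, ±i, ±j, ±k, (±1±i±j±k)/2`. -/
def hurwitzUnits : Set (Quaternion ℝ) :=
  {1, -1, qi, -qi, qj, -qj, qk, -qk} ∪
  {x | ∃ ε₀ ∈ pm, ∃ ε₁ ∈ pm, ∃ ε₂ ∈ pm, ∃ ε₃ ∈ pm,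
    x = (2 : ℝ)⁻¹ • (ε₀ • (1 : Quaternion ℝ) + ε₁ • qi + ε₂ • qj + ε₃ • qk)}

/-- The 24 quaternions `(ε a + ε' b)/√2` where `{a, b}` ranges over the
two-element subsets of `{1, i, j, k}` and `ε, ε' ∈ {±1}`. -/
def octPart : Set (Quaternion ℝ) :=
  {x | ∃ ε ∈ pm, ∃ ε' ∈ pm, ∃ a ∈ ({1, qi, qj, qk} : Set (Quaternion ℝ)),
    ∃ b ∈ ({1, qi, qj, qk} : Set (Quaternion ℝ)), a ≠ b ∧
      x = (Real.sqrt 2)⁻¹ • (ε • a + ε' • b)}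

/-- The 48-element set of the binary octahedral group `2O`. -/
def binaryOct : Set (Quaternion ℝ) := hurwitzUnits ∪ octPart

/-- The real inner product `⟨x, y⟩ = Re(x · conj y)` on ℍ ≅ ℝ⁴. -/
def qInner (x y : Quaternion ℝ) : ℝ := (x * star y).re


/-! Up to rescaling, `binaryOct` is the root system `F₄` inside the Hurwitz order
`Λ = ℤω + ℤi + ℤj + ℤk`, `ω = (1 + i + j + k)/2`: the Hurwitz units are the vectors of `Λ` of
norm `1`, and `√2 • octPart` consists of the vectors of `Λ` of norm `2`. For every such root `r`
and every `v ∈ Λ` the Cartan number `2⟨v, r⟩/⟨r, r⟩` is an integer (a vector of `Λ` of norm `2`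
has integer coordinates with even sum), so the reflection `s_r` preserves `Λ`. Since `s_r`
preserves norms and only depends on the line through `r`, it maps `binaryOct` to itself. -/

open Quaternion Submodule

theorem reflection_orthogonalComplement_singleton_apply {E : Type*} [NormedAddCommGroup E]
    [InnerProductSpace ℝ E] (α v : E) :
    (ℝ ∙ α)ᗮ.reflection v = v - (2 * inner ℝ v α / inner ℝ α α) • α := by
  rw [reflection_orthogonal_apply, reflection_singleton_apply, real_inner_self_eq_norm_sq,
    real_inner_comm]
  simp only [RCLike.ofReal_real_eq_id, id]
  rw [neg_sub, two_smul, ← add_smul]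
  ring_nf

theorem sum_four_sq_eq_one {a b c d : ℤ} (h : a ^ 2 + b ^ 2 + c ^ 2 + d ^ 2 = 1) :
    (a ^ 2 = 1 ∧ b = 0 ∧ c = 0 ∧ d = 0) ∨ (a = 0 ∧ b ^ 2 = 1 ∧ c = 0 ∧ d = 0) ∨
    (a = 0 ∧ b = 0 ∧ c ^ 2 = 1 ∧ d = 0) ∨ (a = 0 ∧ b = 0 ∧ c = 0 ∧ d ^ 2 = 1) := by
  simp only [← sq_eq_zero_iff (a := a), ← sq_eq_zero_iff (a := b), ← sq_eq_zero_iff (a := c),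
    ← sq_eq_zero_iff (a := d)]
  have := sq_nonneg a; have := sq_nonneg b; have := sq_nonneg c; have := sq_nonneg d
  omega

theorem sum_four_sq_eq_two {a b c d : ℤ} (h : a ^ 2 + b ^ 2 + c ^ 2 + d ^ 2 = 2) :
    (a ^ 2 = 1 ∧ b ^ 2 = 1 ∧ c = 0 ∧ d = 0) ∨ (a ^ 2 = 1 ∧ b = 0 ∧ c ^ 2 = 1 ∧ d = 0) ∨
    (a ^ 2 = 1 ∧ b = 0 ∧ c = 0 ∧ d ^ 2 = 1) ∨ (a = 0 ∧ b ^ 2 = 1 ∧ c ^ 2 = 1 ∧ d = 0) ∨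
    (a = 0 ∧ b ^ 2 = 1 ∧ c = 0 ∧ d ^ 2 = 1) ∨ (a = 0 ∧ b = 0 ∧ c ^ 2 = 1 ∧ d ^ 2 = 1) := by
  have sq_ne_two (t : ℤ) : t ^ 2 ≠ 2 := fun ht => Int.sq_ne_two_mod_four t (by rw [← sq, ht]; rfl)
  simp only [← sq_eq_zero_iff (a := a), ← sq_eq_zero_iff (a := b), ← sq_eq_zero_iff (a := c),
    ← sq_eq_zero_iff (a := d)]
  have := sq_nonneg a; have := sq_nonneg b; have := sq_nonneg c; have := sq_nonneg d
  have := sq_ne_two a; have := sq_ne_two b; have := sq_ne_two c; have := sq_ne_two d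
  omega

theorem sum_four_sq_eq_four_of_odd {a b c d : ℤ} (ha : Odd a) (hb : Odd b) (hc : Odd c)
    (hd : Odd d) (h : a ^ 2 + b ^ 2 + c ^ 2 + d ^ 2 = 4) :
    a ^ 2 = 1 ∧ b ^ 2 = 1 ∧ c ^ 2 = 1 ∧ d ^ 2 = 1 := by
  have sq_pos {t : ℤ} (ht : Odd t) : 0 < t ^ 2 := sq_pos_of_ne_zero (by rintro rfl; simp at ht)
  have := sq_pos ha; have := sq_pos hb; have := sq_pos hc; have := sq_pos hd
  omega

@[simp] theorem qi_re : qi.re = 0 := rfl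
@[simp] theorem qi_imI : qi.imI = 1 := rfl
@[simp] theorem qi_imJ : qi.imJ = 0 := rfl
@[simp] theorem qi_imK : qi.imK = 0 := rfl
@[simp] theorem qj_re : qj.re = 0 := rfl
@[simp] theorem qj_imI : qj.imI = 0 := rfl
@[simp] theorem qj_imJ : qj.imJ = 1 := rfl
@[simp] theorem qj_imK : qj.imK = 0 := rfl
@[simp] theorem qk_re : qk.re = 0 := rfl
@[simp] theorem qk_imI : qk.imI = 0 := rfl
@[simp] theorem qk_imJ : qk.imJ = 0 := rfl
@[simp] theorem qk_imK : qk.imK = 1 := rfl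

theorem mem_pm_iff {ε : ℝ} : ε ∈ pm ↔ ε ^ 2 = 1 := by
  simp [pm]

theorem exists_int_eq_two_mul_add_one_of_mem_pm {ε : ℝ} (hε : ε ∈ pm) :
    ∃ n : ℤ, ε = 2 * n + 1 := by
  rcases hε with rfl | rfl
  exacts [⟨0, by norm_num⟩, ⟨-1, by norm_num⟩]

theorem qInner_eq_inner (x y : ℍ[ℝ]) : qInner x y = inner ℝ x y :=
  (Quaternion.inner_def x y).symm

theorem qInner_def' (x y : ℍ[ℝ]) :
    qInner x y = x.re * y.re + x.imI * y.imI + x.imJ * y.imJ + x.imK * y.imK := by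
  simp [qInner]

theorem qInner_self_coords (a b c d : ℝ) :
    qInner (a • 1 + b • qi + c • qj + d • qk) (a • 1 + b • qi + c • qj + d • qk) =
      a ^ 2 + b ^ 2 + c ^ 2 + d ^ 2 := by
  simp [qInner_def']
  ring

theorem qInner_smul_smul (c : ℝ) (x : ℍ[ℝ]) : qInner (c • x) (c • x) = c ^ 2 * qInner x x := by
  simp only [qInner_eq_inner, real_inner_smul_left, real_inner_smul_right]
  ring

theorem qInner_self_of_mem_basis {u : ℍ[ℝ]} (hu : u ∈ ({1, qi, qj, qk} : Set ℍ[ℝ])) :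
    qInner u u = 1 := by
  rcases hu with rfl | rfl | rfl | rfl <;> simp [qInner_def']

theorem qInner_eq_zero_of_mem_basis {u u' : ℍ[ℝ]} (hu : u ∈ ({1, qi, qj, qk} : Set ℍ[ℝ]))
    (hu' : u' ∈ ({1, qi, qj, qk} : Set ℍ[ℝ])) (hne : u ≠ u') : qInner u u' = 0 := by
  rcases hu with rfl | rfl | rfl | rfl <;> rcases hu' with rfl | rfl | rfl | rfl <;>
    simp_all [qInner_def']

def qω : ℍ[ℝ] := (2 : ℝ)⁻¹ • (1 + qi + qj + qk)

def hurwitzOrder : Submodule ℤ ℍ[ℝ] := span ℤ {qω, qi, qj, qk}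

theorem mem_hurwitzOrder_iff {x : ℍ[ℝ]} : x ∈ hurwitzOrder ↔
    ∃ p m₁ m₂ m₃ : ℤ, x = (p : ℝ) • qω + (m₁ : ℝ) • qi + (m₂ : ℝ) • qj + (m₃ : ℝ) • qk := by
  simp only [hurwitzOrder, mem_span_insert, mem_span_singleton, Int.cast_smul_eq_zsmul]
  constructor
  · rintro ⟨p, _, ⟨m₁, _, ⟨m₂, _, ⟨m₃, rfl⟩, rfl⟩, rfl⟩, rfl⟩
    exact ⟨p, m₁, m₂, m₃, by abel⟩
  · rintro ⟨p, m₁, m₂, m₃, rfl⟩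
    exact ⟨p, _, ⟨m₁, _, ⟨m₂, _, ⟨m₃, rfl⟩, rfl⟩, rfl⟩, by abel⟩

theorem hurwitzOrder_cases {x : ℍ[ℝ]} (hx : x ∈ hurwitzOrder) :
    (∃ a b c d : ℤ, x = (a : ℝ) • 1 + (b : ℝ) • qi + (c : ℝ) • qj + (d : ℝ) • qk) ∨
      ∃ a b c d : ℤ, Odd a ∧ Odd b ∧ Odd c ∧ Odd d ∧
        x = (2 : ℝ)⁻¹ • ((a : ℝ) • 1 + (b : ℝ) • qi + (c : ℝ) • qj + (d : ℝ) • qk) := by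
  obtain ⟨p, m₁, m₂, m₃, rfl⟩ := mem_hurwitzOrder_iff.1 hx
  rcases Int.even_or_odd' p with ⟨s, rfl | rfl⟩
  · left
    exact ⟨s, s + m₁, s + m₂, s + m₃, by ext <;> simp [qω] <;> ring⟩
  · right
    refine ⟨2 * s + 1, 2 * (s + m₁) + 1, 2 * (s + m₂) + 1, 2 * (s + m₃) + 1,
      odd_two_mul_add_one _, odd_two_mul_add_one _, odd_two_mul_add_one _,
      odd_two_mul_add_one _, ?_⟩
    ext <;> simp [qω] <;> ring

theorem mem_hurwitzOrder_of_mem_basis {u : ℍ[ℝ]} (hu : u ∈ ({1, qi, qj, qk} : Set ℍ[ℝ])) :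
    u ∈ hurwitzOrder := by
  rw [mem_hurwitzOrder_iff]
  rcases hu with rfl | rfl | rfl | rfl
  · exact ⟨2, -1, -1, -1, by ext <;> simp [qω]⟩
  · exact ⟨0, 1, 0, 0, by simp⟩
  · exact ⟨0, 0, 1, 0, by simp⟩
  · exact ⟨0, 0, 0, 1, by simp⟩

theorem smul_mem_hurwitzOrder_of_mem_pm {ε : ℝ} (hε : ε ∈ pm) {x : ℍ[ℝ]}
    (hx : x ∈ hurwitzOrder) : ε • x ∈ hurwitzOrder := by
  rcases hε with rfl | rfl
  · simpa using hx
  · simpa using neg_mem hx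

theorem exists_two_mul_qInner_eq_intCast {x y : ℍ[ℝ]} (hx : x ∈ hurwitzOrder)
    (hy : y ∈ hurwitzOrder) : ∃ k : ℤ, 2 * qInner x y = k := by
  obtain ⟨p, m₁, m₂, m₃, rfl⟩ := mem_hurwitzOrder_iff.1 hx
  obtain ⟨q, n₁, n₂, n₃, rfl⟩ := mem_hurwitzOrder_iff.1 hy
  refine ⟨2 * p * q + p * (n₁ + n₂ + n₃) + q * (m₁ + m₂ + m₃) +
    2 * (m₁ * n₁ + m₂ * n₂ + m₃ * n₃), ?_⟩
  simp [qInner_def', qω]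
  ring

theorem exists_intCoords_of_qInner_self_eq_two {z : ℍ[ℝ]} (hz : z ∈ hurwitzOrder)
    (h2 : qInner z z = 2) : ∃ a b c d : ℤ, Even (a + b + c + d) ∧
      z = (a : ℝ) • 1 + (b : ℝ) • qi + (c : ℝ) • qj + (d : ℝ) • qk := by
  obtain ⟨p, m₁, m₂, m₃, rfl⟩ := mem_hurwitzOrder_iff.1 hz
  have hN : p ^ 2 + p * (m₁ + m₂ + m₃) + (m₁ ^ 2 + m₂ ^ 2 + m₃ ^ 2) = 2 := by
    have : ((p ^ 2 + p * (m₁ + m₂ + m₃) + (m₁ ^ 2 + m₂ ^ 2 + m₃ ^ 2) : ℤ) : ℝ) = 2 := by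
      simp [qInner_def', qω] at h2
      push_cast
      linear_combination h2
    exact_mod_cast this
  -- `m ^ 2` and `m` have the same parity, so an odd `p` would make the norm odd
  have hpar : Even p ∧ Even (m₁ + m₂ + m₃) := by
    have := hN ▸ even_two
    simp only [Int.even_add, Int.even_mul, Int.even_pow, ne_eq, OfNat.ofNat_ne_zero,
      not_false_eq_true, and_true] at this ⊢
    tauto
  obtain ⟨⟨s, rfl⟩, ⟨t, ht⟩⟩ := hpar
  refine ⟨s, s + m₁, s + m₂, s + m₃, ⟨2 * s + t, by omega⟩, ?_⟩
  ext <;> simp [qω] <;> ring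

theorem exists_qInner_eq_intCast_of_qInner_self_eq_two {x z : ℍ[ℝ]} (hx : x ∈ hurwitzOrder)
    (hz : z ∈ hurwitzOrder) (h2 : qInner z z = 2) : ∃ k : ℤ, qInner x z = k := by
  obtain ⟨a, b, c, d, ⟨t, ht⟩, rfl⟩ := exists_intCoords_of_qInner_self_eq_two hz h2
  obtain ⟨q, n₁, n₂, n₃, rfl⟩ := mem_hurwitzOrder_iff.1 hx
  refine ⟨q * t + n₁ * b + n₂ * c + n₃ * d, ?_⟩
  have ht' : (a + b + c + d : ℝ) = t + t := by exact_mod_cast ht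
  simp [qInner_def', qω]
  linear_combination (q / 2 : ℝ) * ht'

theorem reflection_mem_hurwitzOrder {r v : ℍ[ℝ]} (hr : r ∈ hurwitzOrder)
    (hrr : qInner r r = 1 ∨ qInner r r = 2) (hv : v ∈ hurwitzOrder) :
    (ℝ ∙ r)ᗮ.reflection v ∈ hurwitzOrder := by
  obtain ⟨k, hk⟩ : ∃ k : ℤ, 2 * qInner v r / qInner r r = k := by
    rcases hrr with h | h <;> rw [h]
    · simpa using exists_two_mul_qInner_eq_intCast hv hr
    · simpa using exists_qInner_eq_intCast_of_qInner_self_eq_two hv hr h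
  rw [reflection_orthogonalComplement_singleton_apply, ← qInner_eq_inner, ← qInner_eq_inner, hk,
    Int.cast_smul_eq_zsmul]
  exact sub_mem hv (zsmul_mem hr k)

theorem mem_hurwitzUnits_iff {x : ℍ[ℝ]} :
    x ∈ hurwitzUnits ↔ x ∈ hurwitzOrder ∧ qInner x x = 1 := by
  constructor
  · rintro (h | ⟨ε₀, h₀, ε₁, h₁, ε₂, h₂, ε₃, h₃, rfl⟩)
    · have hbasis : ({1, qi, qj, qk} : Set ℍ[ℝ]) ⊆ hurwitzOrder :=
        fun u hu => mem_hurwitzOrder_of_mem_basis hu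
      rcases h with rfl | rfl | rfl | rfl | rfl | rfl | rfl | rfl <;>
        refine ⟨?_, by simp [qInner_def']⟩
      all_goals first
        | exact neg_mem (hbasis (by simp))
        | exact hbasis (by simp)
    · obtain ⟨n₀, rfl⟩ := exists_int_eq_two_mul_add_one_of_mem_pm h₀
      obtain ⟨n₁, rfl⟩ := exists_int_eq_two_mul_add_one_of_mem_pm h₁
      obtain ⟨n₂, rfl⟩ := exists_int_eq_two_mul_add_one_of_mem_pm h₂
      obtain ⟨n₃, rfl⟩ := exists_int_eq_two_mul_add_one_of_mem_pm h₃
      refine ⟨mem_hurwitzOrder_iff.2 ⟨2 * n₀ + 1, n₁ - n₀, n₂ - n₀, n₃ - n₀, ?_⟩, ?_⟩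
      · ext <;> simp [qω] <;> ring
      · rw [mem_pm_iff] at h₀ h₁ h₂ h₃
        rw [qInner_smul_smul, qInner_self_coords, h₀, h₁, h₂, h₃]
        norm_num
  · rintro ⟨hx, h1⟩
    rcases hurwitzOrder_cases hx with ⟨a, b, c, d, rfl⟩ | ⟨a, b, c, d, ha, hb, hc, hd, rfl⟩
    · have hN : a ^ 2 + b ^ 2 + c ^ 2 + d ^ 2 = 1 := by
        rw [qInner_self_coords] at h1
        exact_mod_cast h1
      left
      rcases sum_four_sq_eq_one hN with ⟨ha, rfl, rfl, rfl⟩ | ⟨rfl, ha, rfl, rfl⟩ |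
        ⟨rfl, rfl, ha, rfl⟩ | ⟨rfl, rfl, rfl, ha⟩ <;>
        rcases sq_eq_one_iff.1 ha with rfl | rfl <;> simp
    · have hN : a ^ 2 + b ^ 2 + c ^ 2 + d ^ 2 = 4 := by
        rw [qInner_smul_smul, qInner_self_coords] at h1
        have : (a : ℝ) ^ 2 + b ^ 2 + c ^ 2 + d ^ 2 = 4 := by linear_combination 4 * h1
        exact_mod_cast this
      obtain ⟨ha, hb, hc, hd⟩ := sum_four_sq_eq_four_of_odd ha hb hc hd hN
      right
      exact ⟨a, mem_pm_iff.2 (by exact_mod_cast ha), b, mem_pm_iff.2 (by exact_mod_cast hb),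
        c, mem_pm_iff.2 (by exact_mod_cast hc), d, mem_pm_iff.2 (by exact_mod_cast hd), rfl⟩

theorem mem_octPart_iff {x : ℍ[ℝ]} :
    x ∈ octPart ↔ Real.sqrt 2 • x ∈ hurwitzOrder ∧ qInner x x = 1 := by
  have hs : Real.sqrt 2 ≠ 0 := by positivity
  have hs2 : Real.sqrt 2 ^ 2 = 2 := Real.sq_sqrt zero_le_two
  constructor
  · rintro ⟨ε, hε, ε', hε', u, hu, u', hu', hne, rfl⟩
    rw [smul_smul, mul_inv_cancel₀ hs, one_smul, qInner_smul_smul]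
    refine ⟨add_mem (smul_mem_hurwitzOrder_of_mem_pm hε (mem_hurwitzOrder_of_mem_basis hu))
      (smul_mem_hurwitzOrder_of_mem_pm hε' (mem_hurwitzOrder_of_mem_basis hu')), ?_⟩
    have huu := qInner_self_of_mem_basis hu
    have hu'u' := qInner_self_of_mem_basis hu'
    have huu' := qInner_eq_zero_of_mem_basis hu hu' hne
    simp only [qInner_eq_inner] at huu hu'u' huu' ⊢
    simp only [inner_add_left, inner_add_right, real_inner_smul_left, real_inner_smul_right,
      real_inner_comm u u', huu, hu'u', huu', inv_pow, hs2]
    rw [mem_pm_iff] at hε hε'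
    linear_combination (hε + hε') / 2
  · rintro ⟨hx, h1⟩
    have h2 : qInner (Real.sqrt 2 • x) (Real.sqrt 2 • x) = 2 := by
      rw [qInner_smul_smul, hs2, h1, mul_one]
    obtain ⟨a, b, c, d, -, hz⟩ := exists_intCoords_of_qInner_self_eq_two hx h2
    have hN : a ^ 2 + b ^ 2 + c ^ 2 + d ^ 2 = 2 := by
      rw [hz, qInner_self_coords] at h2
      exact_mod_cast h2
    have hx' : x = (Real.sqrt 2)⁻¹ •
        ((a : ℝ) • 1 + (b : ℝ) • qi + (c : ℝ) • qj + (d : ℝ) • qk) := by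
      rw [← hz, smul_smul, inv_mul_cancel₀ hs, one_smul]
    rcases sum_four_sq_eq_two hN with ⟨ha, hb, rfl, rfl⟩ | ⟨ha, rfl, hb, rfl⟩ |
      ⟨ha, rfl, rfl, hb⟩ | ⟨rfl, ha, hb, rfl⟩ | ⟨rfl, ha, rfl, hb⟩ | ⟨rfl, rfl, ha, hb⟩ <;>
      simp only [Int.cast_zero, zero_smul, add_zero, zero_add] at hx' <;>
      exact ⟨_, mem_pm_iff.2 (by norm_cast), _, mem_pm_iff.2 (by norm_cast), _, by simp, _,
        by simp, by simp [Quaternion.ext_iff], hx'⟩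

theorem mem_binaryOct_iff {x : ℍ[ℝ]} :
    x ∈ binaryOct ↔ (x ∈ hurwitzOrder ∨ Real.sqrt 2 • x ∈ hurwitzOrder) ∧ qInner x x = 1 := by
  rw [binaryOct, Set.mem_union, mem_hurwitzUnits_iff, mem_octPart_iff, or_and_right]

/-- Regarding ℍ as a four-dimensional real inner product space with
`⟨x,y⟩ = Re(x · conj y)`, the 48-element set `2O` (Hurwitz units together
with the quaternions `(ε a + ε' b)/√2`) is closed under the reflection `s_α`
for every `α` in the set: for all `α, v ∈ 2O`, the vector `v − 2⟨v,α⟩α` is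
again in `2O`. Hence the 48 rotors generated by the reflections of `B₃`,
viewed as vectors in 4-dimensional Euclidean space, form a root system (a
rescaled root system of type `F₄`). -/
theorem binaryOct_closed_under_reflections :
    ∀ α ∈ binaryOct, ∀ v ∈ binaryOct,
      v - (2 * qInner v α) • α ∈ binaryOct := by
  intro α hα v hv
  rw [mem_binaryOct_iff] at hα hv ⊢
  obtain ⟨hαΛ, hα1⟩ := hα
  obtain ⟨hvΛ, hv1⟩ := hv
  have hs : v - (2 * qInner v α) • α = (ℝ ∙ α)ᗮ.reflection v := by
    rw [reflection_orthogonalComplement_singleton_apply, ← qInner_eq_inner, ← qInner_eq_inner,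
      hα1, div_one]
  rw [hs]
  refine ⟨?_, by rw [qInner_eq_inner, LinearIsometryEquiv.inner_map_map, ← qInner_eq_inner, hv1]⟩
  obtain ⟨c, hc, hcα, hcαn⟩ : ∃ c : ℝ, c ≠ 0 ∧ c • α ∈ hurwitzOrder ∧
      (qInner (c • α) (c • α) = 1 ∨ qInner (c • α) (c • α) = 2) := by
    rcases hαΛ with h | h
    · exact ⟨1, one_ne_zero, by simpa using h, by simp [hα1]⟩
    · exact ⟨Real.sqrt 2, by positivity, h, by simp [qInner_smul_smul, hα1]⟩
  simp only [← span_singleton_smul_eq hc.isUnit α]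
  rcases hvΛ with h | h
  · exact Or.inl (reflection_mem_hurwitzOrder hcα hcαn h)
  · exact Or.inr (map_smul (ℝ ∙ c • α)ᗮ.reflection _ v ▸ reflection_mem_hurwitzOrder hcα hcαn h)

end
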